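/- The choice command 'or' is a derived command: let C be a program such that from every graph G, C can both succeed and fail, i.e. for every graph G there exists a graph H with ⟨C,G⟩ →⁺ H, and also ⟨C,G⟩ →⁺ fail (this holds for the program C = remove!; {create, null}; zero of the paper). Then for all programs P and Q, P or Q ≡ if C then P else Q. -/

import Mathlib

/-- GP 2 abstract program syntax over a type `R` of rule-set calls. -/
inductive Prog (R : Type) : Type where
  | call  : R → Prog R                               -- rule-set call
  | seq   : Prog R → Prog R → Prog R                 -- P;Q
  | ite   : Prog R → Prog R → Prog R → Prog R        -- if C then P else Q
  | tryte : Prog R → Prog R → Prog R → Prog R        -- try C then P else Q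
  | if1   : Prog R → Prog R → Prog R                 -- if C then P
  | try1  : Prog R → Prog R → Prog R                 -- try C then P
  | alap  : Prog R → Prog R                          -- P!
  | or    : Prog R → Prog R → Prog R                 -- P or Q
  | skip  : Prog R
  | fail  : Prog R

/-- Configurations: an unfinished computation ⟨P,G⟩, a proper result G, or failure. -/
inductive Config (R Graph : Type) : Type where
  | run    : Prog R → Graph → Config R Graph
  | result : Graph → Config R Graph
  | fail   : Config R Graph

mutual
/-- The small-step transition relation → of GP 2, relative to the
    rule-set application relation `apply` (G ⇒_R H). -/
inductive Step {R Graph : Type} (apply : R → Graph → Graph → Prop) :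
    Config R Graph → Config R Graph → Prop where
  | call₁ {r G H} : apply r G H → Step apply (.run (.call r) G) (.result H)
  | call₂ {r G} : (∀ H, ¬ apply r G H) → Step apply (.run (.call r) G) .fail
  | seq₁ {P Q P' G H} : Step apply (.run P G) (.run P' H) →
      Step apply (.run (.seq P Q) G) (.run (.seq P' Q) H)
  | seq₂ {P Q G H} : Step apply (.run P G) (.result H) →
      Step apply (.run (.seq P Q) G) (.run Q H)
  | seq₃ {P Q G} : Step apply (.run P G) .fail →
      Step apply (.run (.seq P Q) G) .fail
  | if₁ {C P Q G H} : StepPlus apply (.run C G) (.result H) →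
      Step apply (.run (.ite C P Q) G) (.run P G)
  | if₂ {C P Q G} : StepPlus apply (.run C G) .fail →
      Step apply (.run (.ite C P Q) G) (.run Q G)
  | try₁ {C P Q G H} : StepPlus apply (.run C G) (.result H) →
      Step apply (.run (.tryte C P Q) G) (.run P H)
  | try₂ {C P Q G} : StepPlus apply (.run C G) .fail →
      Step apply (.run (.tryte C P Q) G) (.run Q G)
  | alap₁ {P G H} : StepPlus apply (.run P G) (.result H) →
      Step apply (.run (.alap P) G) (.run (.alap P) H)
  | alap₂ {P G} : StepPlus apply (.run P G) .fail →
      Step apply (.run (.alap P) G) (.result G)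
  | or₁ {P Q G} : Step apply (.run (.or P Q) G) (.run P G)
  | or₂ {P Q G} : Step apply (.run (.or P Q) G) (.run Q G)
  | skip {G} : Step apply (.run .skip G) (.result G)
  | fail {G} : Step apply (.run .fail G) .fail
  | if₃ {C P G H} : StepPlus apply (.run C G) (.result H) →
      Step apply (.run (.if1 C P) G) (.run P G)
  | if₄ {C P G} : StepPlus apply (.run C G) .fail →
      Step apply (.run (.if1 C P) G) (.result G)
  | try₃ {C P G H} : StepPlus apply (.run C G) (.result H) →
      Step apply (.run (.try1 C P) G) (.run P H)
  | try₄ {C P G} : StepPlus apply (.run C G) .fail →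
      Step apply (.run (.try1 C P) G) (.result G)

/-- The transitive closure →⁺ of the small-step relation. -/
inductive StepPlus {R Graph : Type} (apply : R → Graph → Graph → Prop) :
    Config R Graph → Config R Graph → Prop where
  | single {γ δ} : Step apply γ δ → StepPlus apply γ δ
  | tail {γ δ ε} : StepPlus apply γ δ → Step apply δ ε → StepPlus apply γ ε
end

/-- `P` can diverge from `G`: there is an infinite →-sequence from ⟨P,G⟩. -/
def CanDiverge {R Graph : Type} (apply : R → Graph → Graph → Prop)
    (P : Prog R) (G : Graph) : Prop :=
  ∃ f : ℕ → Config R Graph, f 0 = .run P G ∧ ∀ n, Step apply (f n) (f (n + 1))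

/-- `P` can get stuck from `G`: some terminal configuration ⟨Q,H⟩ is reachable (→*) from ⟨P,G⟩. -/
def CanGetStuck {R Graph : Type} (apply : R → Graph → Graph → Prop)
    (P : Prog R) (G : Graph) : Prop :=
  ∃ Q H, Relation.ReflTransGen (Step apply) (.run P G) (.run Q H) ∧
    ∀ δ, ¬ Step apply (.run Q H) δ

/-- Possible outcomes of a program run: a proper result graph, failure, or ⊥. -/
inductive SemVal (Graph : Type) : Type where
  | graph : Graph → SemVal Graph
  | fail  : SemVal Graph
  | bot   : SemVal Graph

/-- The semantic function: `Sem apply P G` is the set of all possible results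
    of executing `P` on `G`. -/
def Sem {R Graph : Type} (apply : R → Graph → Graph → Prop)
    (P : Prog R) (G : Graph) : Set (SemVal Graph) :=
  fun X => match X with
    | .graph H => StepPlus apply (.run P G) (.result H)
    | .fail => StepPlus apply (.run P G) .fail
    | .bot => CanDiverge apply P G ∨ CanGetStuck apply P G

/-- Semantic equivalence of programs. -/
def ProgEquiv {R Graph : Type} (apply : R → Graph → Graph → Prop)
    (P Q : Prog R) : Prop :=
  ∀ G, Sem apply P G = Sem apply Q G


/-!
The semantics of a configuration ⟨P,G⟩ is determined by its set of one-step successors: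
every result, failure, divergence or stuck run of ⟨P,G⟩ passes through one of them, unless
⟨P,G⟩ is itself terminal. Since `C` can both succeed and fail from every graph, the rules
if₁ and if₂ both apply, so ⟨if C then P else Q, G⟩ has exactly the successors ⟨P,G⟩ and
⟨Q,G⟩ of ⟨P or Q, G⟩.
-/

section
variable {R Graph : Type} {apply : R → Graph → Graph → Prop}

theorem StepPlus.toTransGen {γ δ : Config R Graph} :
    StepPlus apply γ δ → Relation.TransGen (Step apply) γ δ
  | .single h => .single h
  | .tail h s => .tail h.toTransGen s

theorem Relation.TransGen.toStepPlus {γ δ : Config R Graph}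
    (h : Relation.TransGen (Step apply) γ δ) : StepPlus apply γ δ := by
  induction h with
  | single s => exact .single s
  | tail _ s ih => exact .tail ih s

theorem stepPlus_iff_transGen {γ δ : Config R Graph} :
    StepPlus apply γ δ ↔ Relation.TransGen (Step apply) γ δ :=
  ⟨StepPlus.toTransGen, Relation.TransGen.toStepPlus⟩

variable {P P' : Prog R} {G : Graph}

theorem stepPlus_of_step_iff
    (h : ∀ δ, Step apply (.run P G) δ ↔ Step apply (.run P' G) δ) {ε : Config R Graph} :
    StepPlus apply (.run P G) ε → StepPlus apply (.run P' G) ε := by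
  simp only [stepPlus_iff_transGen, Relation.TransGen.head'_iff, h, imp_self]

theorem canDiverge_of_step_iff
    (h : ∀ δ, Step apply (.run P G) δ ↔ Step apply (.run P' G) δ) :
    CanDiverge apply P G → CanDiverge apply P' G := by
  rintro ⟨f, hf0, hf⟩
  refine ⟨fun | 0 => .run P' G | n + 1 => f (n + 1), rfl, ?_⟩
  rintro (_ | n)
  · exact (h _).mp (hf0 ▸ hf 0)
  · exact hf (n + 1)

theorem canGetStuck_of_step_iff
    (h : ∀ δ, Step apply (.run P G) δ ↔ Step apply (.run P' G) δ) :
    CanGetStuck apply P G → CanGetStuck apply P' G := by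
  rintro ⟨Q, H, hreach, hterm⟩
  rcases Relation.ReflTransGen.cases_head hreach with heq | ⟨δ, hstep, hrest⟩
  · refine ⟨P', G, .refl, fun δ hδ => ?_⟩
    cases heq
    exact hterm δ ((h δ).mpr hδ)
  · exact ⟨Q, H, .head ((h δ).mp hstep) hrest, hterm⟩

theorem sem_subset_of_step_iff
    (h : ∀ δ, Step apply (.run P G) δ ↔ Step apply (.run P' G) δ) :
    Sem apply P G ⊆ Sem apply P' G := by
  rintro (H | _ | _)
  · exact stepPlus_of_step_iff h
  · exact stepPlus_of_step_iff h
  · exact Or.imp (canDiverge_of_step_iff h) (canGetStuck_of_step_iff h)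

theorem sem_eq_of_step_iff
    (h : ∀ δ, Step apply (.run P G) δ ↔ Step apply (.run P' G) δ) :
    Sem apply P G = Sem apply P' G :=
  (sem_subset_of_step_iff h).antisymm (sem_subset_of_step_iff fun δ => (h δ).symm)

theorem step_or_iff {Q : Prog R} {δ : Config R Graph} :
    Step apply (.run (.or P Q) G) δ ↔ δ = .run P G ∨ δ = .run Q G := by
  constructor
  · rintro (_ | _) <;> simp
  · rintro (rfl | rfl)
    exacts [.or₁, .or₂]

theorem step_ite_iff {C Q : Prog R} {δ : Config R Graph} :
    Step apply (.run (.ite C P Q) G) δ ↔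
      δ = .run P G ∧ (∃ H, StepPlus apply (.run C G) (.result H)) ∨
        δ = .run Q G ∧ StepPlus apply (.run C G) .fail := by
  constructor
  · rintro (_ | _)
    exacts [.inl ⟨rfl, _, ‹_›⟩, .inr ⟨rfl, ‹_›⟩]
  · rintro (⟨rfl, H, hH⟩ | ⟨rfl, hC⟩)
    exacts [.if₁ hH, .if₂ hC]

end

/-- if from every graph G the program C can both succeed
    (⟨C,G⟩ →⁺ H for some graph H) and fail (⟨C,G⟩ →⁺ fail), then for all
    programs P and Q, P or Q ≡ if C then P else Q. -/
theorem or_derived {R Graph : Type}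
    (apply : R → Graph → Graph → Prop) (C : Prog R)
    (hsucc : ∀ G : Graph, ∃ H, StepPlus apply (.run C G) (.result H))
    (hfail : ∀ G : Graph, StepPlus apply (.run C G) .fail) :
    ∀ P Q : Prog R, ProgEquiv apply (Prog.or P Q) (Prog.ite C P Q) := by
  intro P Q G
  apply sem_eq_of_step_iff
  intro δ
  simp only [step_or_iff, step_ite_iff, hsucc G, hfail G, and_true]
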